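/- arXiv:1703.05117 — 3 statements merged into one kernel-verified Lean document; each statement's English description precedes it below -/
import Mathlib

section
/- Let t_f > 0 and let r, L, l, γ, χ : [0,t_f] → ℝ be continuous with r(t) > 0 and cos L(t) ≠ 0 for all t, and cos γ(t) ≠ 0 for almost every t ∈ [0,t_f]. Suppose p_r, p_L, p_l : [0,t_f] → ℝ are continuous and satisfy, for almost every t: (i) p_r(t) sin γ(t) + p_L(t) cos γ(t) cos χ(t) / r(t) + p_l(t) cos γ(t) sin χ(t) / (r(t) cos L(t)) = 0; (ii) −p_r(t) cos γ(t) + p_L(t) sin γ(t) cos χ(t) / r(t) + p_l(t) sin γ(t) sin χ(t) / (r(t) cos L(t)) = 0; (iii) p_L(t) cos γ(t) sin χ(t) / r(t) − p_l(t) cos γ(t) cos χ(t) / (r(t) cos L(t)) = 0. Then p_r(t) = p_L(t) = p_l(t) = 0 for all t ∈ [0,t_f]. -/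
open MeasureTheory Real

/- The three equations are, in the unknowns `(p_r, p_L / r, p_l / (r cos L))`, a linear system
whose matrix is an orthogonal matrix with its last row scaled by `cos γ`; so it has only the
trivial solution wherever `cos γ ≠ 0`, i.e. almost everywhere, and continuity of the adjoint
spreads the vanishing to all of `[0, t_f]`. -/

theorem eq_zero_of_rotation_system {x a b γ χ : ℝ} (hγ : cos γ ≠ 0)
    (h₁ : x * sin γ + a * (cos γ * cos χ) + b * (cos γ * sin χ) = 0)
    (h₂ : -x * cos γ + a * (sin γ * cos χ) + b * (sin γ * sin χ) = 0)
    (h₃ : a * (cos γ * sin χ) - b * (cos γ * cos χ) = 0) :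
    x = 0 ∧ a = 0 ∧ b = 0 := by
  have hx : x = 0 := by
    linear_combination sin γ * h₁ - cos γ * h₂ - x * sin_sq_add_cos_sq γ
  refine ⟨hx, mul_left_cancel₀ hγ ?_, mul_left_cancel₀ hγ ?_⟩
  · linear_combination cos χ * h₁ + sin χ * h₃ - cos γ * a * sin_sq_add_cos_sq χ
      - sin γ * cos χ * hx
  · linear_combination sin χ * h₁ - cos χ * h₃ - cos γ * b * sin_sq_add_cos_sq χ
      - sin γ * sin χ * hx

theorem adjoint_eq_zero_of_linear_system {r c γ χ pr pL pl : ℝ}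
    (hr : r ≠ 0) (hc : c ≠ 0) (hγ : cos γ ≠ 0)
    (hH : pr * sin γ + pL * (cos γ * cos χ) / r + pl * (cos γ * sin χ) / (r * c) = 0)
    (hpγ : -pr * cos γ + pL * (sin γ * cos χ) / r + pl * (sin γ * sin χ) / (r * c) = 0)
    (hpχ : pL * (cos γ * sin χ) / r - pl * (cos γ * cos χ) / (r * c) = 0) :
    pr = 0 ∧ pL = 0 ∧ pl = 0 := by
  simp only [mul_div_right_comm _ _ r, mul_div_right_comm _ _ (r * c)] at hH hpγ hpχ
  obtain ⟨hpr, hpL, hpl⟩ := eq_zero_of_rotation_system hγ hH hpγ hpχ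
  exact ⟨hpr, (div_eq_zero_iff.mp hpL).resolve_right hr,
    (div_eq_zero_iff.mp hpl).resolve_right (mul_ne_zero hr hc)⟩

theorem abnormal_adjoint_vanishes_general
    (tf : ℝ) (htf : 0 < tf)
    (r L γ χ : ℝ → ℝ)
    (hrpos : ∀ t ∈ Set.Icc (0 : ℝ) tf, 0 < r t)
    (hcosL : ∀ t ∈ Set.Icc (0 : ℝ) tf, Real.cos (L t) ≠ 0)
    (hcosγ : ∀ᵐ t ∂(volume.restrict (Set.Icc (0 : ℝ) tf)), Real.cos (γ t) ≠ 0)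
    (pr pL pl : ℝ → ℝ)
    (hpr : ContinuousOn pr (Set.Icc 0 tf)) (hpL : ContinuousOn pL (Set.Icc 0 tf))
    (hpl : ContinuousOn pl (Set.Icc 0 tf))
    (hH : ∀ᵐ t ∂(volume.restrict (Set.Icc (0 : ℝ) tf)),
      pr t * Real.sin (γ t) + pL t * (Real.cos (γ t) * Real.cos (χ t)) / r t
        + pl t * (Real.cos (γ t) * Real.sin (χ t)) / (r t * Real.cos (L t)) = 0)
    (hpγ' : ∀ᵐ t ∂(volume.restrict (Set.Icc (0 : ℝ) tf)),
      -(pr t) * Real.cos (γ t) + pL t * (Real.sin (γ t) * Real.cos (χ t)) / r t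
        + pl t * (Real.sin (γ t) * Real.sin (χ t)) / (r t * Real.cos (L t)) = 0)
    (hpχ' : ∀ᵐ t ∂(volume.restrict (Set.Icc (0 : ℝ) tf)),
      pL t * (Real.cos (γ t) * Real.sin (χ t)) / r t
        - pl t * (Real.cos (γ t) * Real.cos (χ t)) / (r t * Real.cos (L t)) = 0) :
    ∀ t ∈ Set.Icc (0 : ℝ) tf, pr t = 0 ∧ pL t = 0 ∧ pl t = 0 := by
  have hae : ∀ᵐ t ∂(volume.restrict (Set.Icc (0 : ℝ) tf)),
      pr t = 0 ∧ pL t = 0 ∧ pl t = 0 := by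
    filter_upwards [hH, hpγ', hpχ', hcosγ, ae_restrict_mem measurableSet_Icc]
      with t e₁ e₂ e₃ hγt ht
    exact adjoint_eq_zero_of_linear_system (hrpos t ht).ne' (hcosL t ht) hγt e₁ e₂ e₃
  have vanishes {p : ℝ → ℝ} (hp : ContinuousOn p (Set.Icc 0 tf))
      (h : ∀ᵐ t ∂(volume.restrict (Set.Icc (0 : ℝ) tf)), p t = 0) :
      Set.EqOn p 0 (Set.Icc 0 tf) :=
    Measure.eqOn_Icc_of_ae_eq _ htf.ne h hp continuousOn_const
  intro t ht
  exact ⟨vanishes hpr (hae.mono fun _ h ↦ h.1) ht, vanishes hpL (hae.mono fun _ h ↦ h.2.1) ht,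
    vanishes hpl (hae.mono fun _ h ↦ h.2.2) ht⟩

/-- Core of the no-abnormal-extremals result (Proposition 1): if the continuous adjoint
components `p_r, p_L, p_l` satisfy, almost everywhere on `[0, t_f]`, the homogeneous
linear system coming from `H = 0`, `p_γ' = 0` and `p_χ' = 0` along a trajectory with
`r > 0`, `cos L ≠ 0` everywhere and `cos γ ≠ 0` almost everywhere, then they vanish
identically on `[0, t_f]`. -/
theorem abnormal_adjoint_vanishes
    (tf : ℝ) (htf : 0 < tf)
    (r L l γ χ : ℝ → ℝ)
    (hr : ContinuousOn r (Set.Icc 0 tf)) (hL : ContinuousOn L (Set.Icc 0 tf))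
    (hl : ContinuousOn l (Set.Icc 0 tf)) (hγ : ContinuousOn γ (Set.Icc 0 tf))
    (hχ : ContinuousOn χ (Set.Icc 0 tf))
    (hrpos : ∀ t ∈ Set.Icc (0 : ℝ) tf, 0 < r t)
    (hcosL : ∀ t ∈ Set.Icc (0 : ℝ) tf, Real.cos (L t) ≠ 0)
    (hcosγ : ∀ᵐ t ∂(volume.restrict (Set.Icc (0 : ℝ) tf)), Real.cos (γ t) ≠ 0)
    (pr pL pl : ℝ → ℝ)
    (hpr : ContinuousOn pr (Set.Icc 0 tf)) (hpL : ContinuousOn pL (Set.Icc 0 tf))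
    (hpl : ContinuousOn pl (Set.Icc 0 tf))
    (hH : ∀ᵐ t ∂(volume.restrict (Set.Icc (0 : ℝ) tf)),
      pr t * Real.sin (γ t) + pL t * (Real.cos (γ t) * Real.cos (χ t)) / r t
        + pl t * (Real.cos (γ t) * Real.sin (χ t)) / (r t * Real.cos (L t)) = 0)
    (hpγ' : ∀ᵐ t ∂(volume.restrict (Set.Icc (0 : ℝ) tf)),
      -(pr t) * Real.cos (γ t) + pL t * (Real.sin (γ t) * Real.cos (χ t)) / r t
        + pl t * (Real.sin (γ t) * Real.sin (χ t)) / (r t * Real.cos (L t)) = 0)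
    (hpχ' : ∀ᵐ t ∂(volume.restrict (Set.Icc (0 : ℝ) tf)),
      pL t * (Real.cos (γ t) * Real.sin (χ t)) / r t
        - pl t * (Real.cos (γ t) * Real.cos (χ t)) / (r t * Real.cos (L t)) = 0) :
    ∀ t ∈ Set.Icc (0 : ℝ) tf, pr t = 0 ∧ pL t = 0 ∧ pl t = 0 :=
  abnormal_adjoint_vanishes_general tf htf r L γ χ hrpos hcosL hcosγ pr pL pl hpr hpL hpl hH hpγ'
    hpχ'
end

section
/- Let I be an interval, c_m ∈ ℝ, and let R, γ, λ₁, u₁, v : I → ℝ be differentiable with R(t) > 0 and satisfying for all t ∈ I: R'(t) = −v(t) cos(γ(t) − λ₁(t)), λ₁'(t) = −(v(t)/R(t)) sin(γ(t) − λ₁(t)), and γ'(t) = v(t) c_m u₁(t). Then for all t ∈ I, d/dt [ R(t) sin(γ(t) − λ₁(t)) ] = −R(t) R'(t) c_m u₁(t). -/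
/-! Multiplied by `R`, the `λ₁'` term in the derivative of `sin (γ − λ₁)` is `v cos (γ − λ₁) sin (γ − λ₁)`,
which cancels `R' sin (γ − λ₁)`. Only `R cos (γ − λ₁) γ'` survives, and substituting
`γ' = v c_m u₁` and `v cos (γ − λ₁) = −R'` gives `−R R' c_m u₁`. -/

open Real

theorem hasDerivAt_mul_sin_sub_of_los {R γ lam : ℝ → ℝ} {t v γ' : ℝ} (hRt : R t ≠ 0)
    (hR : HasDerivAt R (-v * cos (γ t - lam t)) t)
    (hlam : HasDerivAt lam (-(v / R t) * sin (γ t - lam t)) t)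
    (hγ : HasDerivAt γ γ' t) :
    HasDerivAt (fun s => R s * sin (γ s - lam s)) (R t * cos (γ t - lam t) * γ') t := by
  have hsin : HasDerivAt (fun s => sin (γ s - lam s))
      (cos (γ t - lam t) * (γ' - -(v / R t) * sin (γ t - lam t))) t :=
    (hasDerivAt_sin _).comp t (hγ.sub hlam)
  refine (hR.mul hsin).congr_deriv ?_
  have hv : v / R t * R t = v := div_mul_cancel₀ v hRt
  linear_combination cos (γ t - lam t) * sin (γ t - lam t) * hv

theorem deriv_R_sin_los_general
    (I : Set ℝ) (cm : ℝ)
    (R γ lam₁ u₁ v : ℝ → ℝ)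
    (hRpos : ∀ t ∈ I, 0 < R t)
    (hR : ∀ t ∈ I, HasDerivAt R (-(v t) * Real.cos (γ t - lam₁ t)) t)
    (hlam₁ : ∀ t ∈ I, HasDerivAt lam₁ (-(v t / R t) * Real.sin (γ t - lam₁ t)) t)
    (hγ : ∀ t ∈ I, HasDerivAt γ (v t * cm * u₁ t) t) :
    ∀ t ∈ I,
      HasDerivAt (fun s => R s * Real.sin (γ s - lam₁ s))
        (-(R t) * (-(v t) * Real.cos (γ t - lam₁ t)) * cm * u₁ t) t := by
  intro t ht
  convert hasDerivAt_mul_sin_sub_of_los (hRpos t ht).ne' (hR t ht) (hlam₁ t ht) (hγ t ht) using 1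
  ring

/-- Along the line-of-sight kinematics `R' = −v cos(γ − λ₁)`,
`λ₁' = −(v/R) sin(γ − λ₁)` and the simplified path-angle dynamics `γ' = v c_m u₁`,
one has `d/dt [R sin(γ − λ₁)] = −R R' c_m u₁`. -/
theorem deriv_R_sin_los
    (I : Set ℝ) (hI : I.OrdConnected) (cm : ℝ)
    (R γ lam₁ u₁ v : ℝ → ℝ)
    (hu₁ : ∀ t ∈ I, DifferentiableAt ℝ u₁ t)
    (hv : ∀ t ∈ I, DifferentiableAt ℝ v t)
    (hRpos : ∀ t ∈ I, 0 < R t)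
    (hR : ∀ t ∈ I, HasDerivAt R (-(v t) * Real.cos (γ t - lam₁ t)) t)
    (hlam₁ : ∀ t ∈ I, HasDerivAt lam₁ (-(v t / R t) * Real.sin (γ t - lam₁ t)) t)
    (hγ : ∀ t ∈ I, HasDerivAt γ (v t * cm * u₁ t) t) :
    ∀ t ∈ I,
      HasDerivAt (fun s => R s * Real.sin (γ s - lam₁ s))
        (-(R t) * (-(v t) * Real.cos (γ t - lam₁ t)) * cm * u₁ t) t :=
  deriv_R_sin_los_general I cm R γ lam₁ u₁ v hRpos hR hlam₁ hγ
end

section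
/- Let b > 0, c_m ≠ 0, h ∈ ℝ, s_f > 0, A, B ∈ ℝ, and define u : [0, s_f] → ℝ by u(s) = A e^{b(s_f − s)} + B e^{−b(s_f − s)} − h/(c_m). Let γ : [0, s_f] → ℝ be differentiable with γ'(s) = c_m u(s), and let σ : [0, s_f] → ℝ be differentiable with σ'(s) = (s_f − s) c_m u(s) and σ(s_f) = 0. For R > 0 set Δ(R) = 4 + e^{bR}(bR − 2) − e^{−bR}(bR + 2), k₁(R) = bR (e^{bR} − e^{−bR} − 2bR) / Δ(R), and k₂(R) = bR ( e^{bR}(bR − 1) + e^{−bR}(bR + 1) ) / Δ(R). Then for every s ∈ [0, s_f), setting R = s_f − s: −((k₁(R) + k₂(R)) / R²) ( σ(s) − h R²/2 ) − (k₁(R)/R) ( γ(s_f) − γ(s) + h R ) = c_m u(s) + h. -/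
/-!
Write `R = s_f − s` and `cm u + h = a e^{bR} + β e^{−bR}` with `a = cm A`, `β = cm B`. Both
`γ` and `σ` are determined on `[s, s_f]` by their derivatives up to a constant, so
`γ(s_f) − γ(s) + hR` and `σ(s) − hR²/2` can be read off explicit primitives; the `h`-terms cancel
and both quantities become linear in `(a, β)`. The gains `k₁, k₂` are precisely the solution of
the 2×2 linear system that makes the law exact on each exponential mode separately. The common
denominator is `Δ(x) = 8 sinh(x/2) ((x/2) cosh(x/2) − sinh(x/2))`, positive for `x > 0`.
-/

open Real Set

theorem sinh_lt_mul_cosh {t : ℝ} (ht : 0 < t) : sinh t < t * cosh t := by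
  have hmono : StrictMonoOn (fun t : ℝ => t * cosh t - sinh t) (Ici 0) := by
    refine strictMonoOn_of_deriv_pos (convex_Ici 0) (by fun_prop) fun x hx => ?_
    rw [interior_Ici, mem_Ioi] at hx
    have hd : HasDerivAt (fun t : ℝ => t * cosh t - sinh t) (x * sinh x) x :=
      (((hasDerivAt_id' x).mul (hasDerivAt_cosh x)).sub (hasDerivAt_sinh x)).congr_deriv
        (by ring)
    rw [hd.deriv]
    exact mul_pos hx (sinh_pos_iff.2 hx)
  simpa using hmono self_mem_Ici ht.le ht

noncomputable def gainDenom (x : ℝ) : ℝ := 4 + exp x * (x - 2) - exp (-x) * (x + 2)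

noncomputable def gain₁ (x : ℝ) : ℝ := x * (exp x - exp (-x) - 2 * x) / gainDenom x

noncomputable def gain₂ (x : ℝ) : ℝ :=
  x * (exp x * (x - 1) + exp (-x) * (x + 1)) / gainDenom x

theorem gainDenom_eq (x : ℝ) :
    gainDenom x = 8 * sinh (x / 2) * (x / 2 * cosh (x / 2) - sinh (x / 2)) := by
  have hx : x = x / 2 + x / 2 := by ring
  rw [gainDenom, sinh_eq, cosh_eq, hx, exp_add, neg_add, exp_add, ← hx, exp_neg]
  field_simp
  ring

theorem gainDenom_pos {x : ℝ} (hx : 0 < x) : 0 < gainDenom x := by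
  have hy : 0 < x / 2 := half_pos hx
  have hsinh : 0 < sinh (x / 2) := sinh_pos_iff.2 hy
  have hgap : 0 < x / 2 * cosh (x / 2) - sinh (x / 2) := sub_pos.2 (sinh_lt_mul_cosh hy)
  rw [gainDenom_eq]
  positivity

theorem gain_law_exact_on_modes (a β b R : ℝ) (hb : 0 < b) (hR : 0 < R) :
    -((gain₁ (b * R) + gain₂ (b * R)) / R ^ 2) *
        ((a * (exp (b * R) * (1 - b * R) - 1) + β * (exp (-(b * R)) * (1 + b * R) - 1)) / b ^ 2)
      - gain₁ (b * R) / R * ((a * (exp (b * R) - 1) + β * (1 - exp (-(b * R)))) / b)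
      = a * exp (b * R) + β * exp (-(b * R)) := by
  have hΔ := (gainDenom_pos (mul_pos hb hR)).ne'
  rw [gain₁, gain₂]
  -- clear `Δ` while it is an atom: once unfolded, `field_simp` no longer sees it is nonzero
  generalize hD : gainDenom (b * R) = Δ at hΔ ⊢
  field_simp
  rw [← hD, gainDenom, exp_neg]
  field_simp
  ring

theorem sub_eq_sub_of_hasDerivAt {f g f' : ℝ → ℝ} {a b : ℝ} (hab : a ≤ b)
    (hf : ∀ x ∈ Icc a b, HasDerivAt f (f' x) x) (hg : ∀ x ∈ Icc a b, HasDerivAt g (f' x) x) :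
    f b - f a = g b - g a := by
  have hconst := constant_of_has_deriv_right_zero (f := fun x => f x - g x)
    (fun x hx => ((hf x hx).sub (hg x hx)).continuousAt.continuousWithinAt)
    (fun x hx => (((hf x (Ico_subset_Icc_self hx)).sub
      (hg x (Ico_subset_Icc_self hx))).congr_deriv (sub_self _)).hasDerivWithinAt)
    b (right_mem_Icc.2 hab)
  linear_combination hconst

section Modes

variable (a β b c : ℝ)

theorem hasDerivAt_modes_primitive (hb : b ≠ 0) (t : ℝ) :
    HasDerivAt (fun t => -(a * (exp (b * (c - t)) - 1) + β * (1 - exp (-(b * (c - t))))) / b)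
      (a * exp (b * (c - t)) + β * exp (-(b * (c - t)))) t := by
  have hlin : HasDerivAt (fun t => b * (c - t)) (-b) t :=
    ((hasDerivAt_id' t).const_sub c |>.const_mul b).congr_deriv (by ring)
  have hneg : HasDerivAt (fun t => -(b * (c - t))) (- -b) t := hlin.neg
  have := (((hlin.exp.sub_const 1).const_mul a).add
    ((hneg.exp.const_sub 1).const_mul β)).neg.div_const b
  refine this.congr_deriv ?_
  field_simp
  ring

theorem hasDerivAt_modes_moment_primitive (hb : b ≠ 0) (t : ℝ) :
    HasDerivAt (fun t => (a * (exp (b * (c - t)) * (1 - b * (c - t)) - 1)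
        + β * (exp (-(b * (c - t))) * (1 + b * (c - t)) - 1)) / b ^ 2)
      ((c - t) * (a * exp (b * (c - t)) + β * exp (-(b * (c - t))))) t := by
  have hlin : HasDerivAt (fun t => b * (c - t)) (-b) t :=
    ((hasDerivAt_id' t).const_sub c |>.const_mul b).congr_deriv (by ring)
  have hneg : HasDerivAt (fun t => -(b * (c - t))) (- -b) t := hlin.neg
  have := ((((hlin.exp.mul (hlin.const_sub 1)).sub_const 1).const_mul a).add
    (((hneg.exp.mul (hlin.const_add 1)).sub_const 1).const_mul β)).div_const (b ^ 2)
  refine this.congr_deriv ?_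
  field_simp
  ring

variable {a β b c}

theorem increment_eq_of_hasDerivAt_modes {f : ℝ → ℝ} {h s : ℝ} (hb : b ≠ 0) (hs : s ≤ c)
    (hf : ∀ t ∈ Icc s c,
      HasDerivAt f (a * exp (b * (c - t)) + β * exp (-(b * (c - t))) - h) t) :
    f c - f s + h * (c - s)
      = (a * (exp (b * (c - s)) - 1) + β * (1 - exp (-(b * (c - s))))) / b := by
  have hinc := sub_eq_sub_of_hasDerivAt hs hf fun t _ =>
    ((hasDerivAt_modes_primitive a β b c hb t).sub
      ((hasDerivAt_id' t).const_mul h)).congr_deriv (by rw [mul_one])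
  simp only [Pi.sub_apply, sub_self, mul_zero, neg_zero, exp_zero] at hinc
  linear_combination hinc

theorem moment_eq_of_hasDerivAt_modes {f : ℝ → ℝ} {h s : ℝ} (hb : b ≠ 0) (hs : s ≤ c)
    (hf : ∀ t ∈ Icc s c,
      HasDerivAt f ((c - t) * (a * exp (b * (c - t)) + β * exp (-(b * (c - t))) - h)) t)
    (hfc : f c = 0) :
    f s - h * (c - s) ^ 2 / 2
      = (a * (exp (b * (c - s)) * (1 - b * (c - s)) - 1)
        + β * (exp (-(b * (c - s))) * (1 + b * (c - s)) - 1)) / b ^ 2 := by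
  have hinc := sub_eq_sub_of_hasDerivAt hs hf fun t _ =>
    ((hasDerivAt_modes_moment_primitive a β b c hb t).add
      ((((hasDerivAt_id' t).const_sub c).pow 2).const_mul h |>.div_const 2)).congr_deriv
      (by ring)
  simp only [Pi.add_apply, Pi.pow_apply, sub_self, mul_zero, neg_zero, exp_zero] at hinc
  linear_combination hfc - hinc

end Modes

theorem guidance_law_identity_general
    (b cm h sf A B : ℝ) (hb : 0 < b) (hcm : cm ≠ 0)
    (u : ℝ → ℝ)
    (hu : ∀ s ∈ Set.Icc (0 : ℝ) sf,
      u s = A * Real.exp (b * (sf - s)) + B * Real.exp (-(b * (sf - s))) - h / cm)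
    (γ σ : ℝ → ℝ)
    (hγ : ∀ s ∈ Set.Icc (0 : ℝ) sf, HasDerivAt γ (cm * u s) s)
    (hσ : ∀ s ∈ Set.Icc (0 : ℝ) sf, HasDerivAt σ ((sf - s) * (cm * u s)) s)
    (hσf : σ sf = 0)
    (k₁ k₂ : ℝ → ℝ)
    (hk₁ : ∀ R > (0 : ℝ), k₁ R =
      b * R * (Real.exp (b * R) - Real.exp (-(b * R)) - 2 * b * R) /
        (4 + Real.exp (b * R) * (b * R - 2) - Real.exp (-(b * R)) * (b * R + 2)))
    (hk₂ : ∀ R > (0 : ℝ), k₂ R =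
      b * R * (Real.exp (b * R) * (b * R - 1) + Real.exp (-(b * R)) * (b * R + 1)) /
        (4 + Real.exp (b * R) * (b * R - 2) - Real.exp (-(b * R)) * (b * R + 2))) :
    ∀ s ∈ Set.Ico (0 : ℝ) sf,
      -((k₁ (sf - s) + k₂ (sf - s)) / (sf - s) ^ 2) * (σ s - h * (sf - s) ^ 2 / 2)
        - (k₁ (sf - s) / (sf - s)) * (γ sf - γ s + h * (sf - s))
      = cm * u s + h := by
  rintro s ⟨hs0, hssf⟩
  have hR : 0 < sf - s := sub_pos.2 hssf
  have hsub : Icc s sf ⊆ Icc 0 sf := Icc_subset_Icc_left hs0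
  have hcmu : ∀ t ∈ Icc 0 sf,
      cm * u t = cm * A * exp (b * (sf - t)) + cm * B * exp (-(b * (sf - t))) - h := by
    intro t ht
    rw [hu t ht]
    field_simp
  have hγR := increment_eq_of_hasDerivAt_modes hb.ne' hssf.le fun t ht =>
    hcmu t (hsub ht) ▸ hγ t (hsub ht)
  have hσR := moment_eq_of_hasDerivAt_modes hb.ne' hssf.le
    (fun t ht => hcmu t (hsub ht) ▸ hσ t (hsub ht)) hσf
  have hk₁R : k₁ (sf - s) = gain₁ (b * (sf - s)) := by
    rw [hk₁ _ hR, gain₁, gainDenom]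
    ring
  have hk₂R : k₂ (sf - s) = gain₂ (b * (sf - s)) := by
    rw [hk₂ _ hR, gain₂, gainDenom]
  rw [hγR, hσR, hk₁R, hk₂R, hcmu s ⟨hs0, hssf.le⟩, sub_add_cancel]
  exact gain_law_exact_on_modes (cm * A) (cm * B) b (sf - s) hb hR

/-- Exact identity underlying the analytical guidance law: if
`u(s) = A e^{b(s_f−s)} + B e^{−b(s_f−s)} − h/c_m`, `γ' = c_m u`,
`σ' = (s_f − s) c_m u` with `σ(s_f) = 0`, then for `R = s_f − s > 0`,
`−((k₁(R)+k₂(R))/R²)(σ(s) − hR²/2) − (k₁(R)/R)(γ(s_f) − γ(s) + hR) = c_m u(s) + h`,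
where `k₁, k₂` are the gain functions with denominator
`Δ(R) = 4 + e^{bR}(bR−2) − e^{−bR}(bR+2)`. -/
theorem guidance_law_identity
    (b cm h sf A B : ℝ) (hb : 0 < b) (hcm : cm ≠ 0) (hsf : 0 < sf)
    (u : ℝ → ℝ)
    (hu : ∀ s ∈ Set.Icc (0 : ℝ) sf,
      u s = A * Real.exp (b * (sf - s)) + B * Real.exp (-(b * (sf - s))) - h / cm)
    (γ σ : ℝ → ℝ)
    (hγ : ∀ s ∈ Set.Icc (0 : ℝ) sf, HasDerivAt γ (cm * u s) s)
    (hσ : ∀ s ∈ Set.Icc (0 : ℝ) sf, HasDerivAt σ ((sf - s) * (cm * u s)) s)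
    (hσf : σ sf = 0)
    (k₁ k₂ : ℝ → ℝ)
    (hk₁ : ∀ R > (0 : ℝ), k₁ R =
      b * R * (Real.exp (b * R) - Real.exp (-(b * R)) - 2 * b * R) /
        (4 + Real.exp (b * R) * (b * R - 2) - Real.exp (-(b * R)) * (b * R + 2)))
    (hk₂ : ∀ R > (0 : ℝ), k₂ R =
      b * R * (Real.exp (b * R) * (b * R - 1) + Real.exp (-(b * R)) * (b * R + 1)) /
        (4 + Real.exp (b * R) * (b * R - 2) - Real.exp (-(b * R)) * (b * R + 2))) :
    ∀ s ∈ Set.Ico (0 : ℝ) sf,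
      -((k₁ (sf - s) + k₂ (sf - s)) / (sf - s) ^ 2) * (σ s - h * (sf - s) ^ 2 / 2)
        - (k₁ (sf - s) / (sf - s)) * (γ sf - γ s + h * (sf - s))
      = cm * u s + h :=
  guidance_law_identity_general b cm h sf A B hb hcm u hu γ σ hγ hσ hσf k₁ k₂ hk₁ hk₂
end
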